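/- Let I = (xy, xz, yz) ⊆ ℂ[x,y,z]. For every integer r ≥ 1, the Newton polyhedron of the symbolic power I^{(2r-1)} is given by Newt(I^{(2r-1)}) = { (a,b,c) ∈ ℝ^3 : a,b,c ≥ 0, a+b ≥ 2r-1, a+c ≥ 2r-1, b+c ≥ 2r-1, and a+b+c ≥ 3r-1 }. -/

import Mathlib

open Ideal MvPolynomial Pointwise

namespace ELS

/-- Contraction of the localized ideal `J·R_S` under `R → R_S` (the `S`-saturation of `J`). -/
noncomputable def satIdeal {R : Type*} [CommRing R] (S : Submonoid R) (J : Ideal R) : Ideal R :=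
  (J.map (algebraMap R (Localization S))).comap (algebraMap R (Localization S))

/-- The complement of a prime ideal, as a submonoid. -/
def primeComplSub {R : Type*} [CommRing R] (P : Ideal R) (hP : P.IsPrime) : Submonoid R :=
  haveI := hP
  P.primeCompl

/-- The symbolic power of a prime ideal: contraction of `P^p R_P` under `R → R_P`. -/
noncomputable def primeSymbolicPower {R : Type*} [CommRing R] (P : Ideal R) (hP : P.IsPrime)
    (p : ℕ) : Ideal R :=
  satIdeal (primeComplSub P hP) (P ^ p)

/-- The multiplicative set of elements lying outside every minimal prime of `I`. -/
def outMinPrimes {R : Type*} [CommRing R] (I : Ideal R) : Submonoid R where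
  carrier := {s | ∀ Q ∈ I.minimalPrimes, s ∉ Q}
  one_mem' := by
    intro Q hQ h1
    exact hQ.1.1.ne_top ((Ideal.eq_top_iff_one Q).mpr h1)
  mul_mem' := by
    intro a b ha hb Q hQ hab
    rcases hQ.1.1.mem_or_mem hab with h | h
    · exact ha Q hQ h
    · exact hb Q hQ h

/-- The symbolic power of an ideal: contraction of `I^p` localized at the complement of the
union of the minimal primes of `I`. -/
noncomputable def symbolicPower {R : Type*} [CommRing R] (I : Ideal R) (p : ℕ) : Ideal R :=
  satIdeal (outMinPrimes I) (I ^ p)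

/-- A monomial ideal: with every polynomial it contains all monomials in its support. -/
def IsMonomialIdeal {n : ℕ} (a : Ideal (MvPolynomial (Fin n) ℂ)) : Prop :=
  ∀ f ∈ a, ∀ v ∈ f.support, (monomial v (1 : ℂ)) ∈ a

/-- The set of exponent vectors of monomials in `a`, viewed inside `ℝ^n`. -/
def monomSet {n : ℕ} (a : Ideal (MvPolynomial (Fin n) ℂ)) : Set (Fin n → ℝ) :=
  {x | ∃ v : Fin n →₀ ℕ, (monomial v (1 : ℂ)) ∈ a ∧ x = fun i => (v i : ℝ)}

/-- The Newton polyhedron of a monomial ideal: the convex hull in `ℝ^n` of the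
exponent vectors of the monomials in `a`. -/
def newt {n : ℕ} (a : Ideal (MvPolynomial (Fin n) ℂ)) : Set (Fin n → ℝ) :=
  convexHull ℝ (monomSet a)

/-- The least total degree of a nonzero polynomial in `J`: the multiplicity at the origin. -/
noncomputable def mult0 {n : ℕ} (J : Ideal (MvPolynomial (Fin n) ℂ)) : ℕ :=
  sInf {d | ∃ f ∈ J, f ≠ 0 ∧ f.totalDegree = d}

end ELS

/-!
The minimal primes of `I` are the axis ideals `(x_i, x_j)`, so `x^v ∈ I^{(m)}` iff
`v_i + v_j ≥ m` for all `i ≠ j`: necessity since `I^m ⊆ (x_i, x_j)^m` and a multiplier outside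
`(x_i, x_j)` has a monomial free of `x_i, x_j`; sufficiency with the multiplier `x^m + y^m + z^m`.
For `m = 2r - 1` such integer vectors also satisfy `v_0 + v_1 + v_2 ≥ 3r - 1`.

Conversely, a Newton polyhedron is closed under adding nonnegative vectors. If some `z_k ≤ r - 1`,
then `z` dominates a point of the segment from `(2r - 1, 2r - 1, 0)` to `(r, r, r - 1)` (with `k`
in the last slot); otherwise the positive parts of the deficits `r - z_i` sum to at most `1`, and
`z` dominates a convex combination of the permutations of `(r, r, r - 1)`.
-/

theorem ELS.mem_satIdeal_iff {R : Type*} [CommRing R] {S : Submonoid R} {J : Ideal R} {f : R} :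
    f ∈ ELS.satIdeal S J ↔ ∃ s ∈ S, s * f ∈ J :=
  IsLocalization.algebraMap_mem_map_algebraMap_iff S _ J f

namespace MvPolynomial

variable {σ R : Type*} [CommRing R]

theorem isPrime_span_X_image [IsDomain R] (T : Set σ) :
    (Ideal.span (X '' T : Set (MvPolynomial σ R))).IsPrime := by
  classical
  set P := Ideal.span (X '' T : Set (MvPolynomial σ R))
  -- `P` is the kernel of the substitution `g` killing the variables in `T`, because `g` is the
  -- identity modulo `P`
  let g : MvPolynomial σ R →ₐ[R] MvPolynomial σ R := aeval fun i => if i ∈ T then 0 else X i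
  have hg : (Ideal.Quotient.mkₐ R P).comp g = Ideal.Quotient.mkₐ R P := by
    refine algHom_ext fun i => ?_
    by_cases hi : i ∈ T
    · have hX : (X i : MvPolynomial σ R) ∈ P := Ideal.subset_span (Set.mem_image_of_mem X hi)
      simpa [g, hi, eq_comm (a := (0 : MvPolynomial σ R ⧸ P)), Ideal.Quotient.eq_zero_iff_mem]
        using hX
    · simp [g, hi]
  suffices P = RingHom.ker g from this ▸ RingHom.ker_isPrime _
  refine le_antisymm (Ideal.span_le.mpr ?_) fun f hf => ?_
  · rintro _ ⟨i, hi, rfl⟩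
    simp [g, hi]
  · rw [← Ideal.Quotient.eq_zero_iff_mem, ← Ideal.Quotient.mkₐ_eq_mk R, ← hg]
    simp [RingHom.mem_ker.mp hf]

theorem X_mem_span_X_image_iff [Nontrivial R] {T : Set σ} {k : σ} :
    (X k : MvPolynomial σ R) ∈ Ideal.span (X '' T) ↔ k ∈ T := by
  classical
  simp [mem_ideal_span_X_image, support_X, Finsupp.single_apply]

theorem le_sum_of_mem_pow_span_X_image {T : Finset σ} {m : ℕ} {f : MvPolynomial σ R}
    (hf : f ∈ Ideal.span (X '' (T : Set σ)) ^ m) : ∀ u ∈ f.support, m ≤ ∑ i ∈ T, u i := by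
  classical
  induction m generalizing f with
  | zero => simp
  | succ m ih =>
    rw [pow_succ] at hf
    refine Submodule.mul_induction_on hf (fun g hg h hh u hu => ?_) (fun g h hg hh u hu => ?_)
    · obtain ⟨a, ha, b, hb, rfl⟩ := Finset.mem_add.mp (support_mul g h hu)
      obtain ⟨i, hiT, hbi⟩ := mem_ideal_span_X_image.mp hh b hb
      have hb1 : 1 ≤ ∑ i ∈ T, b i :=
        (Nat.one_le_iff_ne_zero.mpr hbi).trans (Finset.single_le_sum (by simp) hiT)
      simp only [Finsupp.add_apply, Finset.sum_add_distrib]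
      linarith [ih hg a ha]
    · rcases Finset.mem_union.mp (support_add hu) with hu | hu
      exacts [hg u hu, hh u hu]

theorem le_sum_of_mul_monomial_mem_pow_span_X_image {T : Finset σ} {m : ℕ}
    {s : MvPolynomial σ R} (hs : s ∉ Ideal.span (X '' (T : Set σ))) {v : σ →₀ ℕ}
    (h : s * monomial v 1 ∈ Ideal.span (X '' (T : Set σ)) ^ m) : m ≤ ∑ i ∈ T, v i := by
  obtain ⟨u, hu, huT⟩ : ∃ u ∈ s.support, ∀ i ∈ T, u i = 0 := by
    simpa [mem_ideal_span_X_image] using hs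
  have huv : u + v ∈ (s * monomial v 1).support := by
    simpa [coeff_mul_monomial] using hu
  simpa [Finset.sum_add_distrib, Finset.sum_eq_zero huT] using
    le_sum_of_mem_pow_span_X_image h _ huv

variable (σ R) in
/-- The edge ideal of the complete graph on `σ`. Its zero locus is the union of the coordinate
axes, whose ideals are the `span (X '' {k}ᶜ)`. -/
noncomputable def axesIdeal : Ideal (MvPolynomial σ R) :=
  Ideal.span {X i * X j | (i : σ) (j : σ) (_ : i ≠ j)}

theorem X_mul_X_mem_axesIdeal {i j : σ} (h : i ≠ j) : X i * X j ∈ axesIdeal σ R :=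
  Ideal.subset_span ⟨i, j, h, rfl⟩

theorem axesIdeal_le_span_X_compl (k : σ) : axesIdeal σ R ≤ Ideal.span (X '' {k}ᶜ) := by
  refine Ideal.span_le.mpr ?_
  rintro _ ⟨i, j, hij, rfl⟩
  by_cases hi : i = k
  · exact Ideal.mul_mem_left _ _ (Ideal.subset_span ⟨j, fun hj => hij (hi.trans hj.symm), rfl⟩)
  · exact Ideal.mul_mem_right _ _ (Ideal.subset_span ⟨i, hi, rfl⟩)

theorem span_X_compl_le_of_X_notMem {Q : Ideal (MvPolynomial σ R)} (hQ : Q.IsPrime)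
    (hIQ : axesIdeal σ R ≤ Q) {k : σ} (hk : X k ∉ Q) : Ideal.span (X '' {k}ᶜ) ≤ Q := by
  refine Ideal.span_le.mpr ?_
  rintro _ ⟨i, hi, rfl⟩
  exact (hQ.mem_or_mem (hIQ (X_mul_X_mem_axesIdeal hi))).resolve_right hk

theorem span_X_compl_mem_minimalPrimes [IsDomain R] (k : σ) :
    Ideal.span (X '' {k}ᶜ) ∈ (axesIdeal σ R).minimalPrimes := by
  refine ⟨⟨isPrime_span_X_image _, axesIdeal_le_span_X_compl k⟩, fun Q ⟨hQ, hIQ⟩ hQle => ?_⟩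
  refine span_X_compl_le_of_X_notMem hQ hIQ fun hk => ?_
  simpa using X_mem_span_X_image_iff.mp (hQle hk)

theorem minimalPrimes_axesIdeal [IsDomain R] [Nonempty σ] :
    (axesIdeal σ R).minimalPrimes = Set.range fun k => Ideal.span (X '' {k}ᶜ) := by
  refine Set.Subset.antisymm (fun Q hQ => ?_)
    (Set.range_subset_iff.mpr span_X_compl_mem_minimalPrimes)
  obtain ⟨⟨hQp, hIQ⟩, hmin⟩ := hQ
  obtain ⟨k, hk⟩ : ∃ k, X k ∉ Q := by
    by_contra! hall
    obtain ⟨k⟩ := ‹Nonempty σ›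
    have hle : Ideal.span (X '' {k}ᶜ) ≤ Q := Ideal.span_le.mpr fun _ ⟨i, _, hi⟩ => hi ▸ hall i
    simpa using X_mem_span_X_image_iff.mp (hmin (span_X_compl_mem_minimalPrimes k).1 hle (hall k))
  have hle := span_X_compl_le_of_X_notMem hQp hIQ hk
  exact ⟨k, le_antisymm hle (hmin (span_X_compl_mem_minimalPrimes k).1 hle)⟩

section Fintype

variable [Fintype σ] [DecidableEq σ]

theorem X_pow_mul_monomial_mem_axesIdeal_pow {k : σ} {m : ℕ} {v : σ →₀ ℕ}
    (hv : m ≤ ∑ i ∈ {k}ᶜ, v i) : X k ^ m * monomial v 1 ∈ axesIdeal σ R ^ m := by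
  induction m generalizing v with
  | zero => simp
  | succ m ih =>
    obtain ⟨j, hjk, hj⟩ := Finset.exists_ne_zero_of_sum_ne_zero (by omega : ∑ i ∈ {k}ᶜ, v i ≠ 0)
    obtain ⟨w, rfl⟩ := le_iff_exists_add.mp
      (Finsupp.single_le_iff.mpr (Nat.one_le_iff_ne_zero.mpr hj))
    have hw : m ≤ ∑ i ∈ {k}ᶜ, w i := by
      simp only [Finsupp.add_apply, Finset.sum_add_distrib, Finsupp.single_apply,
        Finset.sum_ite_eq, hjk, if_true] at hv
      omega
    have hkj : k ≠ j := by simpa [eq_comm] using hjk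
    have hmon : monomial (Finsupp.single j 1 + w) (1 : R) = X j * monomial w 1 := by
      rw [X, monomial_mul, one_mul]
    rw [hmon, pow_succ', pow_succ']
    convert Ideal.mul_mem_mul (X_mul_X_mem_axesIdeal hkj) (ih hw) using 1
    ring

theorem sum_X_pow_notMem_span_X_compl [IsDomain R] {m : ℕ} (hm : m ≠ 0) (k : σ) :
    ∑ i, (X i : MvPolynomial σ R) ^ m ∉ Ideal.span (X '' {k}ᶜ) := by
  intro h
  have hrest : ∑ i ∈ Finset.univ.erase k, (X i : MvPolynomial σ R) ^ m ∈
      Ideal.span (X '' {k}ᶜ) :=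
    Ideal.sum_mem _ fun i hi => Ideal.pow_mem_of_mem _
      (Ideal.subset_span (Set.mem_image_of_mem X (Finset.ne_of_mem_erase hi))) m
      (Nat.pos_of_ne_zero hm)
  rw [← Finset.add_sum_erase _ _ (Finset.mem_univ k), Ideal.add_mem_iff_left _ hrest] at h
  simpa using X_mem_span_X_image_iff.mp ((isPrime_span_X_image _).mem_of_pow_mem m h)

theorem monomial_mem_symbolicPower_axesIdeal_iff [IsDomain R] [Nonempty σ] {m : ℕ} (hm : m ≠ 0)
    (v : σ →₀ ℕ) :
    monomial v 1 ∈ ELS.symbolicPower (axesIdeal σ R) m ↔ ∀ k, m ≤ ∑ i ∈ {k}ᶜ, v i := by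
  have hS (s : MvPolynomial σ R) :
      s ∈ ELS.outMinPrimes (axesIdeal σ R) ↔ ∀ k, s ∉ Ideal.span (X '' {k}ᶜ) := by
    change (∀ Q ∈ _, s ∉ Q) ↔ _
    simp [minimalPrimes_axesIdeal]
  rw [ELS.symbolicPower, ELS.mem_satIdeal_iff]
  constructor
  · rintro ⟨s, hs, hsv⟩ k
    refine le_sum_of_mul_monomial_mem_pow_span_X_image (by simpa using (hS s).mp hs k) ?_
    simpa using Ideal.pow_right_mono (axesIdeal_le_span_X_compl k) m hsv
  · refine fun hv => ⟨∑ i, X i ^ m, (hS _).mpr (sum_X_pow_notMem_span_X_compl hm), ?_⟩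
    rw [Finset.sum_mul]
    exact Ideal.sum_mem _ fun k _ => X_pow_mul_monomial_mem_axesIdeal_pow (hv k)

end Fintype

end MvPolynomial

namespace ELS

theorem mem_convexHull_range_natCast {t : ℝ} (ht : 0 ≤ t) :
    t ∈ convexHull ℝ (Set.range (Nat.cast : ℕ → ℝ)) := by
  refine segment_subset_convexHull (Set.mem_range_self ⌊t⌋₊) (Set.mem_range_self (⌊t⌋₊ + 1)) ?_
  rw [segment_eq_Icc (by simp)]
  exact ⟨Nat.floor_le ht, by exact_mod_cast (Nat.lt_floor_add_one t).le⟩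

theorem monomSet_add_subset {n : ℕ} (a : Ideal (MvPolynomial (Fin n) ℂ)) :
    monomSet a + Set.univ.pi (fun _ => Set.range (Nat.cast : ℕ → ℝ)) ⊆ monomSet a := by
  rintro _ ⟨_, ⟨v, hv, rfl⟩, e, he, rfl⟩
  choose w hw using fun i => he i (Set.mem_univ i)
  refine ⟨v + Finsupp.equivFunOnFinite.symm w, ?_, ?_⟩
  · rw [← one_mul (1 : ℂ), ← monomial_mul]
    exact a.mul_mem_right _ hv
  · ext i
    simp [hw]

theorem add_mem_newt {n : ℕ} {a : Ideal (MvPolynomial (Fin n) ℂ)} {x d : Fin n → ℝ}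
    (hx : x ∈ newt a) (hd : 0 ≤ d) : x + d ∈ newt a := by
  have hd' : d ∈ convexHull ℝ (Set.univ.pi fun _ => Set.range (Nat.cast : ℕ → ℝ)) := by
    rw [convexHull_pi]
    exact fun i _ => mem_convexHull_range_natCast (hd i)
  have := Set.add_mem_add hx hd'
  rw [newt, ← convexHull_add] at this
  exact convexHull_mono (monomSet_add_subset a) this

theorem mem_newt_of_le {n : ℕ} {a : Ideal (MvPolynomial (Fin n) ℂ)} {x y : Fin n → ℝ}
    (hx : x ∈ newt a) (hxy : x ≤ y) : y ∈ newt a := by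
  simpa using add_mem_newt hx (sub_nonneg.mpr hxy)

theorem monomSet_symbolicPower_axesIdeal {n m : ℕ} [NeZero n] (hm : m ≠ 0) :
    monomSet (symbolicPower (axesIdeal (Fin n) ℂ) m) =
      {x | ∃ v : Fin n → ℕ, (∀ k, m ≤ ∑ i ∈ {k}ᶜ, v i) ∧ x = fun i => (v i : ℝ)} := by
  ext x
  constructor
  · rintro ⟨v, hv, rfl⟩
    exact ⟨v, (monomial_mem_symbolicPower_axesIdeal_iff hm v).mp hv, rfl⟩
  · rintro ⟨v, hv, rfl⟩
    exact ⟨Finsupp.equivFunOnFinite.symm v,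
      (monomial_mem_symbolicPower_axesIdeal_iff hm _).mpr (by simpa using hv), by simp⟩

end ELS

theorem span_triangle_eq_axesIdeal {R : Type*} [CommRing R] :
    (Ideal.span {X 0 * X 1, X 0 * X 2, X 1 * X 2} : Ideal (MvPolynomial (Fin 3) R)) =
      axesIdeal (Fin 3) R := by
  refine le_antisymm (Ideal.span_le.mpr ?_) (Ideal.span_le.mpr ?_)
  · rintro _ (rfl | rfl | rfl) <;> exact X_mul_X_mem_axesIdeal (by decide)
  · rintro _ ⟨i, j, hij, rfl⟩
    fin_cases i <;> fin_cases j <;> simp at hij ⊢ <;> apply Ideal.subset_span <;>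
      simp [mul_comm (X (2 : Fin 3)), mul_comm (X (1 : Fin 3)) (X 0)]

theorem forall_le_sum_compl_fin_three {m : ℕ} {v : Fin 3 → ℕ} :
    (∀ k : Fin 3, m ≤ ∑ i ∈ {k}ᶜ, v i) ↔ m ≤ v 0 + v 1 ∧ m ≤ v 0 + v 2 ∧ m ≤ v 1 + v 2 := by
  have h0 : ({0}ᶜ : Finset (Fin 3)) = {1, 2} := by decide
  have h1 : ({1}ᶜ : Finset (Fin 3)) = {0, 2} := by decide
  have h2 : ({2}ᶜ : Finset (Fin 3)) = {0, 1} := by decide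
  simp [Fin.forall_fin_succ, h0, h1, h2]
  tauto

namespace ELS

theorem ite_natCast_mem_newt {m a b : ℕ} (hm : m ≠ 0) (k : Fin 3) (hab : m ≤ a + b)
    (hbb : m ≤ b + b) :
    (fun i => if i = k then (a : ℝ) else b) ∈ newt (symbolicPower (axesIdeal (Fin 3) ℂ) m) := by
  refine subset_convexHull ℝ _ ?_
  rw [monomSet_symbolicPower_axesIdeal hm]
  refine ⟨fun i => if i = k then a else b, forall_le_sum_compl_fin_three.mpr ?_, ?_⟩
  · fin_cases k <;> simp <;> omega
  · simp [apply_ite]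

def trianglePolyhedron (r : ℕ) : Set (Fin 3 → ℝ) :=
  {w | (∀ i, 0 ≤ w i) ∧ 2 * (r : ℝ) - 1 ≤ w 0 + w 1 ∧ 2 * (r : ℝ) - 1 ≤ w 0 + w 2 ∧
    2 * (r : ℝ) - 1 ≤ w 1 + w 2 ∧ 3 * (r : ℝ) - 1 ≤ w 0 + w 1 + w 2}

theorem convex_trianglePolyhedron (r : ℕ) : Convex ℝ (trianglePolyhedron r) := by
  rintro x ⟨hx, hx01, hx02, hx12, hx3⟩ y ⟨hy, hy01, hy02, hy12, hy3⟩ a b ha hb hab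
  simp only [trianglePolyhedron, Set.mem_ofPred_eq, Pi.add_apply, Pi.smul_apply, smul_eq_mul]
  refine ⟨fun i => by nlinarith [hx i, hy i], ?_, ?_, ?_, ?_⟩ <;> nlinarith

theorem newt_subset_trianglePolyhedron {r : ℕ} (hr : 1 ≤ r) :
    newt (symbolicPower (axesIdeal (Fin 3) ℂ) (2 * r - 1)) ⊆ trianglePolyhedron r := by
  refine convexHull_min ?_ (convex_trianglePolyhedron r)
  rw [monomSet_symbolicPower_axesIdeal (by omega)]
  rintro _ ⟨v, hv, rfl⟩
  obtain ⟨h01, h02, h12⟩ := forall_le_sum_compl_fin_three.mp hv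
  obtain ⟨h01', h02', h12', h3⟩ : (2 * r : ℝ) ≤ v 0 + v 1 + 1 ∧ (2 * r : ℝ) ≤ v 0 + v 2 + 1 ∧
      (2 * r : ℝ) ≤ v 1 + v 2 + 1 ∧ (3 * r : ℝ) ≤ v 0 + v 1 + v 2 + 1 := by
    exact_mod_cast (by omega : 2 * r ≤ v 0 + v 1 + 1 ∧ 2 * r ≤ v 0 + v 2 + 1 ∧
      2 * r ≤ v 1 + v 2 + 1 ∧ 3 * r ≤ v 0 + v 1 + v 2 + 1)
  exact ⟨fun i => Nat.cast_nonneg _, by linarith, by linarith, by linarith, by linarith⟩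

theorem ite_mem_newt_of_mem_Icc {r : ℕ} (hr : 1 ≤ r) (k : Fin 3) {t : ℝ}
    (ht : t ∈ Set.Icc 0 ((r : ℝ) - 1)) :
    (fun i => if i = k then t else 2 * (r : ℝ) - 1 - t) ∈
      newt (symbolicPower (axesIdeal (Fin 3) ℂ) (2 * r - 1)) := by
  let p : ℝ →ᵃ[ℝ] Fin 3 → ℝ := AffineMap.lineMap (fun i => if i = k then 0 else 2 * (r : ℝ) - 1)
    (fun i => if i = k then 1 else 2 * (r : ℝ) - 2)
  have hp (t : ℝ) : p t = fun i => if i = k then t else 2 * (r : ℝ) - 1 - t := by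
    funext i
    simp only [p, AffineMap.lineMap_apply_module', Pi.add_apply, Pi.sub_apply,
      Pi.smul_apply, smul_eq_mul]
    split_ifs <;> ring
  have hconv : Convex ℝ (p ⁻¹' newt (symbolicPower (axesIdeal (Fin 3) ℂ) (2 * r - 1))) :=
    (convex_convexHull ℝ _).affine_preimage p
  have h0 : p 0 ∈ newt (symbolicPower (axesIdeal (Fin 3) ℂ) (2 * r - 1)) := by
    have hm : ((2 * r - 1 : ℕ) : ℝ) = 2 * r - 1 := by
      rw [Nat.cast_sub (by omega)]; push_cast; ring
    rw [hp]
    simpa [hm] using ite_natCast_mem_newt (a := 0) (b := 2 * r - 1) (by omega) k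
      (by omega) (by omega)
  have h1 : p (r - 1) ∈ newt (symbolicPower (axesIdeal (Fin 3) ℂ) (2 * r - 1)) := by
    have hr' : ((r - 1 : ℕ) : ℝ) = r - 1 := by rw [Nat.cast_sub hr]; push_cast; ring
    rw [hp, show 2 * (r : ℝ) - 1 - (r - 1) = r by ring]
    simpa [hr'] using ite_natCast_mem_newt (a := r - 1) (b := r) (by omega) k
      (by omega) (by omega)
  simpa [hp] using hconv.ordConnected.out h0 h1 ht

theorem const_sub_mem_newt_of_mem_stdSimplex {r : ℕ} (hr : 1 ≤ r) {c : Fin 3 → ℝ}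
    (hc : c ∈ stdSimplex ℝ (Fin 3)) :
    (fun i => r - c i) ∈ newt (symbolicPower (axesIdeal (Fin 3) ℂ) (2 * r - 1)) := by
  have hr' : ((r - 1 : ℕ) : ℝ) = r - 1 := by rw [Nat.cast_sub hr]; push_cast; ring
  have hvert (k : Fin 3) : (fun i => if i = k then (r : ℝ) - 1 else r) ∈
      newt (symbolicPower (axesIdeal (Fin 3) ℂ) (2 * r - 1)) := by
    simpa [hr'] using ite_natCast_mem_newt (a := r - 1) (b := r) (by omega) k
      (by omega) (by omega)
  have hsum : ∑ k, c k • (fun i => if i = k then (r : ℝ) - 1 else r) ∈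
      newt (symbolicPower (axesIdeal (Fin 3) ℂ) (2 * r - 1)) :=
    (convex_convexHull ℝ _).sum_mem (fun k _ => hc.1 k) hc.2 fun k _ => hvert k
  convert hsum using 1
  have hc1 : c 0 + c 1 + c 2 = 1 := by simpa [Fin.sum_univ_three] using hc.2
  funext i
  fin_cases i <;> simp [Fin.sum_univ_three] <;> linear_combination -(r : ℝ) * hc1

theorem trianglePolyhedron_subset_newt {r : ℕ} (hr : 1 ≤ r) :
    trianglePolyhedron r ⊆ newt (symbolicPower (axesIdeal (Fin 3) ℂ) (2 * r - 1)) := by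
  rintro z ⟨hz, h01, h02, h12, h3⟩
  by_cases hsmall : ∃ k, z k ≤ r - 1
  · obtain ⟨k, hk⟩ := hsmall
    refine mem_newt_of_le (ite_mem_newt_of_mem_Icc hr k ⟨hz k, hk⟩) fun i => ?_
    fin_cases k <;> fin_cases i <;> simp <;> linarith
  · push Not at hsmall
    have hz0 := hsmall 0
    have hz1 := hsmall 1
    have hz2 := hsmall 2
    obtain ⟨a, ha0, haz, ha⟩ : ∃ a : ℝ, 0 ≤ a ∧ r - z 0 ≤ a ∧ (a = 0 ∨ a = r - z 0) :=
      ⟨max 0 (r - z 0), le_max_left _ _, le_max_right _ _, max_choice _ _⟩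
    obtain ⟨b, hb0, hbz, hb⟩ : ∃ b : ℝ, 0 ≤ b ∧ r - z 1 ≤ b ∧ (b = 0 ∨ b = r - z 1) :=
      ⟨max 0 (r - z 1), le_max_left _ _, le_max_right _ _, max_choice _ _⟩
    have hab : a + b + (r - z 2) ≤ 1 ∧ a + b ≤ 1 := by
      rcases ha with rfl | rfl <;> rcases hb with rfl | rfl <;> constructor <;> linarith
    refine mem_newt_of_le (const_sub_mem_newt_of_mem_stdSimplex hr (c := ![a, b, 1 - a - b])
      ⟨fun i => ?_, by simp [Fin.sum_univ_three]⟩) fun i => ?_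
    all_goals fin_cases i <;> simp <;> linarith

end ELS

open MvPolynomial in
/-- for `I = (xy, xz, yz) ⊆ ℂ[x,y,z]` and `r ≥ 1`,
`Newt(I^{(2r-1)}) = {(a,b,c) : a,b,c ≥ 0, a+b, a+c, b+c ≥ 2r-1, a+b+c ≥ 3r-1}`. -/
theorem stmt17 (r : ℕ) (hr : 1 ≤ r) :
    ELS.newt (ELS.symbolicPower
        (Ideal.span {X 0 * X 1, X 0 * X 2, X 1 * X 2} : Ideal (MvPolynomial (Fin 3) ℂ))
        (2 * r - 1)) =
      {w : Fin 3 → ℝ | (∀ i, 0 ≤ w i) ∧ 2 * (r : ℝ) - 1 ≤ w 0 + w 1 ∧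
        2 * (r : ℝ) - 1 ≤ w 0 + w 2 ∧ 2 * (r : ℝ) - 1 ≤ w 1 + w 2 ∧
        3 * (r : ℝ) - 1 ≤ w 0 + w 1 + w 2} := by
  rw [span_triangle_eq_axesIdeal]
  exact (ELS.newt_subset_trianglePolyhedron hr).antisymm (ELS.trianglePolyhedron_subset_newt hr)
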